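/- Suppose x₀,₀ ∈ ℝⁿ satisfies F(x₀,₀) ≤ 0 entrywise, 0 ≤ x₀,₀ entrywise, and eᵀx₀,₀ ≤ 1. Then the outer sequence x_k := x_{k,0} of the modified Newton algorithm converges to a limit x* ∈ ℝⁿ satisfying F(x*) = 0, i.e., x* = αR(x* ⊗ x*) + (1−α)v; moreover F(x_k) → 0 as k → ∞. -/
import Mathlib


open Matrix BigOperators Finset Filter

noncomputable section

/-- Kronecker product of two vectors: `(u ⊗ w)_{(i,j)} = u_i w_j`. -/
def kron {n : ℕ} (u w : Fin n → ℝ) : Fin n × Fin n → ℝ := fun p => u p.1 * w p.2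

/-- `u ⊗ I` : the `n² × n` Kronecker product of a vector with the identity,
so that `(u ⊗ I) w = u ⊗ w`. -/
def kronVecId {n : ℕ} (u : Fin n → ℝ) : Matrix (Fin n × Fin n) (Fin n) ℝ :=
  Matrix.of fun p k => u p.1 * (if p.2 = k then (1 : ℝ) else 0)

/-- `I ⊗ u` : the `n² × n` Kronecker product of the identity with a vector,
so that `(I ⊗ u) w = w ⊗ u`. -/
def idKronVec {n : ℕ} (u : Fin n → ℝ) : Matrix (Fin n × Fin n) (Fin n) ℝ :=
  Matrix.of fun p k => (if p.1 = k then (1 : ℝ) else 0) * u p.2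

/-- `F(x) = x − α R (x ⊗ x) − (1 − α) v`. -/
def Fmap {n : ℕ} (α : ℝ) (R : Matrix (Fin n) (Fin n × Fin n) ℝ) (v : Fin n → ℝ)
    (x : Fin n → ℝ) : Fin n → ℝ :=
  x - α • R.mulVec (kron x x) - (1 - α) • v

/-- `F'ₓ = I − α R (x ⊗ I + I ⊗ x)`. -/
def Fprime {n : ℕ} (α : ℝ) (R : Matrix (Fin n) (Fin n × Fin n) ℝ)
    (x : Fin n → ℝ) : Matrix (Fin n) (Fin n) ℝ :=
  1 - α • (R * (kronVecId x + idKronVec x))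

/-- One step of the modified Newton iteration with the derivative frozen at `b`. -/
def mnStep {n : ℕ} (α : ℝ) (R : Matrix (Fin n) (Fin n × Fin n) ℝ) (v : Fin n → ℝ)
    (b : Fin n → ℝ) (w : Fin n → ℝ) : Fin n → ℝ :=
  w - (Fprime α R b)⁻¹.mulVec (Fmap α R v w)

/-- The outer sequence of the modified Newton algorithm: `mnOuter … i = x_{i,0}`,
where `x_{i+1,0} = x_{i,nᵢ}` is obtained by applying `nᵢ` frozen Newton steps to `x_{i,0}`. -/
def mnOuter {n : ℕ} (α : ℝ) (R : Matrix (Fin n) (Fin n × Fin n) ℝ) (v : Fin n → ℝ)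
    (ni : ℕ → ℕ) (x0 : Fin n → ℝ) : ℕ → (Fin n → ℝ)
  | 0 => x0
  | (i + 1) => (mnStep α R v (mnOuter α R v ni x0 i))^[ni i] (mnOuter α R v ni x0 i)

/-- The inner iterates of the modified Newton algorithm: `mnIter … i s = x_{i,s}`. -/
def mnIter {n : ℕ} (α : ℝ) (R : Matrix (Fin n) (Fin n × Fin n) ℝ) (v : Fin n → ℝ)
    (ni : ℕ → ℕ) (x0 : Fin n → ℝ) (i s : ℕ) : Fin n → ℝ :=
  (mnStep α R v (mnOuter α R v ni x0 i))^[s] (mnOuter α R v ni x0 i)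


lemma kronVecId_mulVec {n : ℕ} (u w : Fin n → ℝ) : (kronVecId u).mulVec w = kron u w := by
  funext p
  simp [kronVecId, kron, Matrix.mulVec, dotProduct, mul_ite, ite_mul, mul_assoc]

lemma idKronVec_mulVec {n : ℕ} (u w : Fin n → ℝ) : (idKronVec u).mulVec w = kron w u := by
  funext p
  simp [idKronVec, kron, Matrix.mulVec, dotProduct, mul_ite, ite_mul, mul_comm]

lemma Fprime_mulVec {n : ℕ} (α : ℝ) (R : Matrix (Fin n) (Fin n × Fin n) ℝ)
    (b d : Fin n → ℝ) :
    (Fprime α R b).mulVec d = d - α • R.mulVec (kron b d + kron d b) := by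
  rw [Fprime, Matrix.sub_mulVec, Matrix.one_mulVec, Matrix.smul_mulVec,
    ← Matrix.mulVec_mulVec, Matrix.add_mulVec, kronVecId_mulVec, idKronVec_mulVec,
    Matrix.mulVec_add]

lemma sum_mulVec {n : ℕ} (R : Matrix (Fin n) (Fin n × Fin n) ℝ)
    (hRcol : ∀ p, ∑ i, R i p = 1) (w : Fin n × Fin n → ℝ) :
    ∑ i, R.mulVec w i = ∑ p, w p := by
  simp only [Matrix.mulVec, dotProduct]
  rw [Finset.sum_comm]
  exact Finset.sum_congr rfl fun p _ => by rw [← Finset.sum_mul, hRcol, one_mul]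

lemma sum_kron {n : ℕ} (u w : Fin n → ℝ) :
    ∑ p : Fin n × Fin n, kron u w p = (∑ i, u i) * (∑ i, w i) := by
  rw [Fintype.sum_prod_type, Finset.sum_mul_sum]
  rfl

section
variable {n : ℕ} {m : Type*} [Fintype m]

lemma mulVec_nonneg' (R : Matrix (Fin n) m ℝ) (hR0 : ∀ i p, 0 ≤ R i p)
    {w : m → ℝ} (hw : 0 ≤ w) : 0 ≤ R.mulVec w := by
  intro i
  exact Finset.sum_nonneg fun p _ => mul_nonneg (hR0 i p) (hw p)

lemma mulVec_mono' (R : Matrix (Fin n) m ℝ) (hR0 : ∀ i p, 0 ≤ R i p)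
    {u w : m → ℝ} (huw : u ≤ w) : R.mulVec u ≤ R.mulVec w := by
  intro i
  exact Finset.sum_le_sum fun p _ => mul_le_mul_of_nonneg_left (huw p) (hR0 i p)
end

section Mmatrix
variable {n : ℕ} {α : ℝ} {R : Matrix (Fin n) (Fin n × Fin n) ℝ} {b : Fin n → ℝ}
variable (hα0 : 0 < α) (hα : α < 1/2) (hR0 : ∀ i p, 0 ≤ R i p)
  (hRcol : ∀ p, ∑ i, R i p = 1) (hb0 : 0 ≤ b) (hb1 : ∑ i, b i ≤ 1)

include hα0 hα hR0 hRcol hb0 hb1 in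
lemma Fprime_mulVec_nonneg {x : Fin n → ℝ}
    (hx : 0 ≤ (Fprime α R b).mulVec x) : 0 ≤ x := by
  rw [Fprime_mulVec] at hx
  set g : Fin n → ℝ := fun i => max (-x i) 0 with hg
  have hg0 : 0 ≤ g := fun i => le_max_right _ _
  have hxg : -x ≤ g := fun i => le_max_left _ _
  have key : ∀ i, g i ≤ α * R.mulVec (kron b g + kron g b) i := by
    intro i
    have h1 : α * R.mulVec (kron b x + kron x b) i ≤ x i := by
      have := hx i
      simp only [Pi.sub_apply, Pi.smul_apply, smul_eq_mul, Pi.zero_apply] at this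
      linarith
    have hmono : -(R.mulVec (kron b x + kron x b)) ≤ R.mulVec (kron b g + kron g b) := by
      rw [← Matrix.mulVec_neg]
      apply mulVec_mono' R hR0
      intro p
      simp only [Pi.add_apply, Pi.neg_apply, kron]
      have h2 : b p.1 * (-(x p.2)) ≤ b p.1 * g p.2 :=
        mul_le_mul_of_nonneg_left (hxg p.2) (hb0 p.1)
      have h3 : (-(x p.1)) * b p.2 ≤ g p.1 * b p.2 :=
        mul_le_mul_of_nonneg_right (hxg p.1) (hb0 p.2)
      nlinarith [h2, h3]
    have hneg : -x i ≤ α * R.mulVec (kron b g + kron g b) i := by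
      have := mul_le_mul_of_nonneg_left (hmono i) (le_of_lt hα0)
      simp only [Pi.neg_apply, mul_neg] at this
      linarith
    have hnn : 0 ≤ α * R.mulVec (kron b g + kron g b) i := by
      apply mul_nonneg (le_of_lt hα0)
      apply mulVec_nonneg' R hR0
      intro p
      simp only [Pi.add_apply, kron]
      exact add_nonneg (mul_nonneg (hb0 p.1) (hg0 p.2)) (mul_nonneg (hg0 p.1) (hb0 p.2))
    exact max_le hneg hnn
  -- sum up
  have hsum : ∑ i, g i ≤ α * (2 * ((∑ i, b i) * (∑ i, g i))) := by
    calc ∑ i, g i ≤ ∑ i, α * R.mulVec (kron b g + kron g b) i :=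
          Finset.sum_le_sum fun i _ => key i
      _ = α * ∑ i, R.mulVec (kron b g + kron g b) i := by rw [Finset.mul_sum]
      _ = α * (2 * ((∑ i, b i) * (∑ i, g i))) := by
          rw [sum_mulVec R hRcol]
          congr 1
          simp only [Pi.add_apply]
          rw [Finset.sum_add_distrib, sum_kron, sum_kron]
          ring
  have hgs0 : 0 ≤ ∑ i, g i := Finset.sum_nonneg fun i _ => hg0 i
  have hbs0 : 0 ≤ ∑ i, b i := Finset.sum_nonneg fun i _ => hb0 i
  have hgz : ∑ i, g i = 0 := by
    have h1 : (∑ i, b i) * (∑ i, g i) ≤ ∑ i, g i := mul_le_of_le_one_left hgs0 hb1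
    nlinarith
  have : ∀ i, g i = 0 := by
    intro i
    have := (Finset.sum_eq_zero_iff_of_nonneg (fun j _ => hg0 j)).mp hgz i (Finset.mem_univ i)
    exact this
  intro i
  have hgi := this i
  have h := hxg i
  rw [hgi] at h
  simpa using neg_nonpos.mp h

include hα0 hα hR0 hRcol hb0 hb1 in
lemma Fprime_isUnit_det : IsUnit (Fprime α R b).det := by
  rw [isUnit_iff_ne_zero]
  intro hdet
  obtain ⟨y, hy0, hy⟩ := (Matrix.exists_mulVec_eq_zero_iff).mpr hdet
  have h1 : 0 ≤ y := Fprime_mulVec_nonneg hα0 hα hR0 hRcol hb0 hb1 (by rw [hy])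
  have h2 : 0 ≤ -y := by
    apply Fprime_mulVec_nonneg hα0 hα hR0 hRcol hb0 hb1 (x := -y)
    rw [Matrix.mulVec_neg, hy, neg_zero]
  apply hy0
  funext i
  have := h1 i; have := h2 i
  simp only [Pi.neg_apply, Pi.zero_apply] at *
  linarith

include hα0 hα hR0 hRcol hb0 hb1 in
lemma Fprime_mulVec_inv (y : Fin n → ℝ) :
    (Fprime α R b).mulVec ((Fprime α R b)⁻¹.mulVec y) = y := by
  rw [Matrix.mulVec_mulVec, Matrix.mul_nonsing_inv _ (Fprime_isUnit_det hα0 hα hR0 hRcol hb0 hb1),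
    Matrix.one_mulVec]
end Mmatrix

section step
variable {n : ℕ} {α : ℝ} {R : Matrix (Fin n) (Fin n × Fin n) ℝ} {v : Fin n → ℝ}

lemma sum_Fmap (hRcol : ∀ p, ∑ i, R i p = 1) (hv1 : ∑ i, v i = 1) (w : Fin n → ℝ) :
    ∑ i, Fmap α R v w i = (∑ i, w i) - α * (∑ i, w i)^2 - (1-α) := by
  simp only [Fmap, Pi.sub_apply, Pi.smul_apply, smul_eq_mul]
  rw [Finset.sum_sub_distrib, Finset.sum_sub_distrib, ← Finset.mul_sum,
    sum_mulVec R hRcol, sum_kron, ← Finset.mul_sum, hv1]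
  ring

lemma Fmap_step (b w d : Fin n → ℝ) :
    Fmap α R v (w + d) = Fmap α R v w + (Fprime α R b).mulVec d
      + α • R.mulVec (fun p => (b p.1 - (w p.1 + d p.1)) * d p.2 + d p.1 * (b p.2 - w p.2)) := by
  have hz : kron (w+d) (w+d) = kron w w + (kron b d + kron d b)
      - (fun p => (b p.1 - (w p.1 + d p.1)) * d p.2 + d p.1 * (b p.2 - w p.2)) := by
    funext p
    simp only [kron, Pi.add_apply, Pi.sub_apply]
    ring
  rw [Fprime_mulVec]
  simp only [Fmap, hz, Matrix.mulVec_add, Matrix.mulVec_sub]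
  funext i
  simp only [Pi.add_apply, Pi.sub_apply, Pi.smul_apply, smul_eq_mul]
  ring
end step

section step2
variable {n : ℕ} {α : ℝ} {R : Matrix (Fin n) (Fin n × Fin n) ℝ} {v : Fin n → ℝ}
variable (hα0 : 0 < α) (hα : α < 1/2) (hR0 : ∀ i p, 0 ≤ R i p)
  (hRcol : ∀ p, ∑ i, R i p = 1) (hv1 : ∑ i, v i = 1)

include hα0 hα hR0 hRcol hv1 in
lemma mnStep_prop {b w : Fin n → ℝ} (hb0 : 0 ≤ b) (hbw : b ≤ w)
    (hFw : Fmap α R v w ≤ 0) (hw1 : ∑ i, w i ≤ 1) :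
    w ≤ mnStep α R v b w ∧ Fmap α R v (mnStep α R v b w) ≤ 0 ∧
      ∑ i, mnStep α R v b w i ≤ 1 := by
  have hb1 : ∑ i, b i ≤ 1 :=
    le_trans (Finset.sum_le_sum fun i _ => hbw i) hw1
  set d := (Fprime α R b)⁻¹.mulVec (-(Fmap α R v w)) with hd
  have hstep : mnStep α R v b w = w + d := by
    funext i
    simp only [mnStep, hd, Matrix.mulVec_neg, Pi.sub_apply, Pi.add_apply, Pi.neg_apply]
    ring
  have hAd : (Fprime α R b).mulVec d = -(Fmap α R v w) :=
    Fprime_mulVec_inv hα0 hα hR0 hRcol hb0 hb1 _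
  have hd0 : 0 ≤ d := by
    apply Fprime_mulVec_nonneg hα0 hα hR0 hRcol hb0 hb1
    rw [hAd]
    exact neg_nonneg.mpr hFw
  have hwd : w ≤ w + d := le_add_of_nonneg_right hd0
  -- sums
  have hsb0 : 0 ≤ ∑ i, b i := Finset.sum_nonneg fun i _ => hb0 i
  have hsbw : ∑ i, b i ≤ ∑ i, w i := Finset.sum_le_sum fun i _ => hbw i
  have hsd0 : 0 ≤ ∑ i, d i := Finset.sum_nonneg fun i _ => hd0 i
  have hL : ∑ i, ((Fprime α R b).mulVec d) i
      = (∑ i, d i) - α * (2 * ((∑ i, b i) * (∑ i, d i))) := by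
    rw [Fprime_mulVec]
    simp only [Pi.sub_apply, Pi.smul_apply, smul_eq_mul]
    rw [Finset.sum_sub_distrib, ← Finset.mul_sum, sum_mulVec R hRcol]
    simp only [Pi.add_apply]
    rw [Finset.sum_add_distrib, sum_kron, sum_kron]
    ring
  have hReq : ∑ i, (-(Fmap α R v w)) i
      = -((∑ i, w i) - α * (∑ i, w i)^2 - (1-α)) := by
    simp only [Pi.neg_apply]
    rw [Finset.sum_neg_distrib, sum_Fmap hRcol hv1]
  have heq : (∑ i, d i) - α * (2 * ((∑ i, b i) * (∑ i, d i)))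
      = -((∑ i, w i) - α * (∑ i, w i)^2 - (1-α)) := by
    rw [← hL, ← hReq]
    exact congrArg (fun y => ∑ i, y i) hAd
  have hpos : 0 < 1 - 2*α*(∑ i, b i) := by nlinarith
  have hsd1 : ∑ i, d i ≤ 1 - ∑ i, w i := by
    have hkey : 0 ≤ α * (1 - ∑ i, w i) * (1 + (∑ i, w i) - 2 * ∑ i, b i) := by
      apply mul_nonneg (mul_nonneg hα0.le (by linarith))
      linarith
    nlinarith [heq, hpos, hkey]
  -- F(w+d) ≤ 0
  have hF : Fmap α R v (w + d) ≤ 0 := by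
    rw [Fmap_step b w d, hAd]
    have hZ : ∀ i, R.mulVec (fun p => (b p.1 - (w p.1 + d p.1)) * d p.2
        + d p.1 * (b p.2 - w p.2)) i ≤ 0 := by
      intro i
      apply Finset.sum_nonpos
      intro p _
      apply mul_nonpos_of_nonneg_of_nonpos (hR0 i p)
      have hbw1 : b p.1 ≤ w p.1 := hbw p.1
      have hbw2 : b p.2 ≤ w p.2 := hbw p.2
      have hd1 : (0:ℝ) ≤ d p.1 := hd0 p.1
      have hd2 : (0:ℝ) ≤ d p.2 := hd0 p.2
      show (b p.1 - (w p.1 + d p.1)) * d p.2 + d p.1 * (b p.2 - w p.2) ≤ 0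
      nlinarith
    intro i
    have := hZ i
    simp only [Pi.add_apply, Pi.neg_apply, Pi.smul_apply, Pi.zero_apply, smul_eq_mul]
    nlinarith [this, hα0.le]
  refine ⟨?_, ?_, ?_⟩
  · rw [hstep]; exact hwd
  · rw [hstep]; exact hF
  · rw [hstep]
    simp only [Pi.add_apply]
    rw [Finset.sum_add_distrib]
    linarith
end step2

section chain
variable {n : ℕ} {α : ℝ} {R : Matrix (Fin n) (Fin n × Fin n) ℝ} {v : Fin n → ℝ}
variable (hα0 : 0 < α) (hα : α < 1/2) (hR0 : ∀ i p, 0 ≤ R i p)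
  (hRcol : ∀ p, ∑ i, R i p = 1) (hv1 : ∑ i, v i = 1)

include hα0 hα hR0 hRcol hv1 in
lemma inner_chain {b : Fin n → ℝ} (hb0 : 0 ≤ b) (hFb : Fmap α R v b ≤ 0)
    (hb1 : ∑ i, b i ≤ 1) : ∀ s : ℕ,
    b ≤ (mnStep α R v b)^[s] b ∧ Fmap α R v ((mnStep α R v b)^[s] b) ≤ 0 ∧
      (∑ i, (mnStep α R v b)^[s] b i ≤ 1) ∧
      (mnStep α R v b)^[s] b ≤ (mnStep α R v b)^[s+1] b := by
  intro s
  induction s with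
  | zero =>
    refine ⟨le_refl b, hFb, hb1, ?_⟩
    simpa using (mnStep_prop hα0 hα hR0 hRcol hv1 hb0 (le_refl b) hFb hb1).1
  | succ s ih =>
    obtain ⟨h1, h2, h3, h4⟩ := ih
    have hstep := mnStep_prop hα0 hα hR0 hRcol hv1 hb0 h1 h2 h3
    have e : (mnStep α R v b)^[s+1] b = mnStep α R v b ((mnStep α R v b)^[s] b) :=
      Function.iterate_succ_apply' _ _ _
    have hF' : Fmap α R v ((mnStep α R v b)^[s+1] b) ≤ 0 := by rw [e]; exact hstep.2.1
    have hS' : ∑ i, (mnStep α R v b)^[s+1] b i ≤ 1 := by rw [e]; exact hstep.2.2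
    refine ⟨le_trans h1 h4, hF', hS', ?_⟩
    have hstep2 := mnStep_prop hα0 hα hR0 hRcol hv1 hb0 (le_trans h1 h4) hF' hS'
    rw [Function.iterate_succ_apply' (mnStep α R v b) (s+1)]
    exact hstep2.1

include hα0 hα hR0 hRcol hv1 in
lemma inner_mono {b : Fin n → ℝ} (hb0 : 0 ≤ b) (hFb : Fmap α R v b ≤ 0)
    (hb1 : ∑ i, b i ≤ 1) {s t : ℕ} (hst : s ≤ t) :
    (mnStep α R v b)^[s] b ≤ (mnStep α R v b)^[t] b := by
  induction t with
  | zero => simp_all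
  | succ t ih =>
    rcases Nat.lt_or_ge s (t+1) with h | h
    · exact le_trans (ih (Nat.lt_succ_iff.mp h))
        (inner_chain hα0 hα hR0 hRcol hv1 hb0 hFb hb1 t).2.2.2
    · have : s = t + 1 := le_antisymm hst h
      rw [this]

include hα0 hα hR0 hRcol hv1 in
lemma outer_inv (ni : ℕ → ℕ) {x0 : Fin n → ℝ} (hx00 : 0 ≤ x0)
    (hFx0 : Fmap α R v x0 ≤ 0) (hx01 : ∑ i, x0 i ≤ 1) : ∀ k : ℕ,
    0 ≤ mnOuter α R v ni x0 k ∧ Fmap α R v (mnOuter α R v ni x0 k) ≤ 0 ∧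
      ∑ i, mnOuter α R v ni x0 k i ≤ 1 ∧
      mnOuter α R v ni x0 k ≤ mnOuter α R v ni x0 (k+1) := by
  intro k
  induction k with
  | zero =>
    refine ⟨hx00, hFx0, hx01, ?_⟩
    show x0 ≤ (mnStep α R v x0)^[ni 0] x0
    exact (inner_chain hα0 hα hR0 hRcol hv1 hx00 hFx0 hx01 (ni 0)).1
  | succ k ih =>
    obtain ⟨h0, hF, h1, hle⟩ := ih
    have hc := inner_chain hα0 hα hR0 hRcol hv1 h0 hF h1 (ni k)
    have h0' : 0 ≤ mnOuter α R v ni x0 (k+1) := le_trans h0 hle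
    refine ⟨h0', hc.2.1, hc.2.2.1, ?_⟩
    show mnOuter α R v ni x0 (k+1) ≤ (mnStep α R v (mnOuter α R v ni x0 (k+1)))^[ni (k+1)]
      (mnOuter α R v ni x0 (k+1))
    exact (inner_chain hα0 hα hR0 hRcol hv1 h0' hc.2.1 hc.2.2.1 (ni (k+1))).1
end chain


theorem stmt14 {n : ℕ} (hn : 1 ≤ n) (α : ℝ) (hα0 : 0 < α) (hα : α < 1 / 2)
    (R : Matrix (Fin n) (Fin n × Fin n) ℝ) (hR0 : ∀ i p, 0 ≤ R i p)
    (hRcol : ∀ p, ∑ i, R i p = 1)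
    (v : Fin n → ℝ) (hv0 : 0 ≤ v) (hv1 : ∑ i, v i = 1)
    (ni : ℕ → ℕ) (hni : ∀ i, 1 ≤ ni i)
    (x0 : Fin n → ℝ) (hFx0 : Fmap α R v x0 ≤ 0) (hx00 : 0 ≤ x0)
    (hx01 : ∑ i, x0 i ≤ 1) :
    ∃ xstar : Fin n → ℝ,
      Filter.Tendsto (mnOuter α R v ni x0) Filter.atTop (nhds xstar) ∧
      Fmap α R v xstar = 0 ∧
      xstar = α • R.mulVec (kron xstar xstar) + (1 - α) • v ∧
      Filter.Tendsto (fun k => Fmap α R v (mnOuter α R v ni x0 k))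
        Filter.atTop (nhds 0) := by
  set X := mnOuter α R v ni x0 with hX
  have hinv := outer_inv hα0 hα hR0 hRcol hv1 ni hx00 hFx0 hx01
  have hmono : ∀ i, Monotone fun k => X k i := by
    intro i
    apply monotone_nat_of_le_succ
    intro k
    exact (hinv k).2.2.2 i
  have hbdd : ∀ k i, X k i ≤ 1 := by
    intro k i
    have h0 := (hinv k).1
    have := Finset.single_le_sum (f := fun j => X k j) (fun j _ => h0 j) (Finset.mem_univ i)
    linarith [(hinv k).2.2.1]
  set xstar : Fin n → ℝ := fun i => ⨆ k, X k i with hxstar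
  have ht : ∀ i, Tendsto (fun k => X k i) atTop (nhds (xstar i)) := by
    intro i
    exact tendsto_atTop_ciSup (hmono i) ⟨1, by rintro y ⟨k, rfl⟩; exact hbdd k i⟩
  have hxt : Tendsto X atTop (nhds xstar) := tendsto_pi_nhds.mpr ht
  -- the increments
  set δ : ℕ → Fin n → ℝ :=
    fun k => (Fprime α R (X k))⁻¹.mulVec (-(Fmap α R v (X k))) with hδ
  have hAd : ∀ k, (Fprime α R (X k)).mulVec (δ k) = -(Fmap α R v (X k)) :=
    fun k => Fprime_mulVec_inv hα0 hα hR0 hRcol (hinv k).1 (hinv k).2.2.1 _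
  have hδ0 : ∀ k, 0 ≤ δ k := by
    intro k
    apply Fprime_mulVec_nonneg hα0 hα hR0 hRcol (hinv k).1 (hinv k).2.2.1
    rw [hAd k]
    exact neg_nonneg.mpr (hinv k).2.1
  have hδle : ∀ k, X k + δ k ≤ X (k+1) := by
    intro k
    have h1 : (mnStep α R v (X k))^[1] (X k) ≤ (mnStep α R v (X k))^[ni k] (X k) :=
      inner_mono hα0 hα hR0 hRcol hv1 (hinv k).1 (hinv k).2.1 (hinv k).2.2.1 (hni k)
    have h2 : (mnStep α R v (X k))^[1] (X k) = X k + δ k := by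
      rw [Function.iterate_one]
      funext i
      simp only [mnStep, hδ, Matrix.mulVec_neg, Pi.sub_apply, Pi.add_apply, Pi.neg_apply]
      ring
    rw [h2] at h1
    exact h1
  have hδt : ∀ i, Tendsto (fun k => δ k i) atTop (nhds 0) := by
    intro i
    have hup : Tendsto (fun k => X (k+1) i - X k i) atTop (nhds 0) := by
      have := (((ht i).comp (tendsto_add_atTop_nat 1)).sub (ht i))
      simpa using this
    apply tendsto_of_tendsto_of_tendsto_of_le_of_le tendsto_const_nhds hup
    · intro k; exact hδ0 k i
    · intro k
      have := hδle k i
      simp only [Pi.add_apply] at this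
      show δ k i ≤ X (k+1) i - X k i
      linarith
  -- formula for F at the outer iterates
  have hFform : ∀ k i, Fmap α R v (X k) i
      = α * (∑ p, R i p * (X k p.1 * δ k p.2 + δ k p.1 * X k p.2)) - δ k i := by
    intro k i
    have h := congrFun (hAd k) i
    rw [Fprime_mulVec] at h
    simp only [Pi.sub_apply, Pi.smul_apply, Pi.neg_apply, smul_eq_mul] at h
    have e : R.mulVec (kron (X k) (δ k) + kron (δ k) (X k)) i
        = ∑ p, R i p * (X k p.1 * δ k p.2 + δ k p.1 * X k p.2) := by
      simp only [Matrix.mulVec, dotProduct, Pi.add_apply, kron]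
    rw [e] at h
    linarith
  have hF0 : ∀ i, Tendsto (fun k => Fmap α R v (X k) i) atTop (nhds 0) := by
    intro i
    have hsum : Tendsto (fun k => ∑ p, R i p * (X k p.1 * δ k p.2 + δ k p.1 * X k p.2))
        atTop (nhds (∑ p : Fin n × Fin n, R i p * (xstar p.1 * 0 + 0 * xstar p.2))) := by
      apply tendsto_finset_sum
      intro p _
      exact (((ht p.1).mul (hδt p.2)).add ((hδt p.1).mul (ht p.2))).const_mul (R i p)
    have h2 : Tendsto (fun k => α * (∑ p, R i p * (X k p.1 * δ k p.2 + δ k p.1 * X k p.2))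
        - δ k i) atTop (nhds (α * (∑ p : Fin n × Fin n, R i p * (xstar p.1 * 0 + 0 * xstar p.2)) - 0)) :=
      (hsum.const_mul α).sub (hδt i)
    have h3 : α * (∑ p : Fin n × Fin n, R i p * (xstar p.1 * 0 + 0 * xstar p.2)) - 0 = 0 := by
      simp
    rw [h3] at h2
    exact h2.congr fun k => (hFform k i).symm
  have e2 : ∀ (w : Fin n → ℝ) i, Fmap α R v w i
      = w i - α * (∑ p, R i p * (w p.1 * w p.2)) - (1-α) * v i := by
    intro w i
    simp only [Fmap, Pi.sub_apply, Pi.smul_apply, smul_eq_mul, Matrix.mulVec, dotProduct, kron]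
  have hFstar : ∀ i, Tendsto (fun k => Fmap α R v (X k) i) atTop (nhds (Fmap α R v xstar i)) := by
    intro i
    have hsum : Tendsto (fun k => ∑ p, R i p * (X k p.1 * X k p.2))
        atTop (nhds (∑ p : Fin n × Fin n, R i p * (xstar p.1 * xstar p.2))) := by
      apply tendsto_finset_sum
      intro p _
      exact ((ht p.1).mul (ht p.2)).const_mul (R i p)
    have h2 : Tendsto (fun k => X k i - α * (∑ p, R i p * (X k p.1 * X k p.2)) - (1-α) * v i)
        atTop (nhds (xstar i - α * (∑ p : Fin n × Fin n, R i p * (xstar p.1 * xstar p.2)) - (1-α) * v i)) :=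
      ((ht i).sub (hsum.const_mul α)).sub tendsto_const_nhds
    rw [← e2 xstar i] at h2
    exact h2.congr fun k => (e2 (X k) i).symm
  have hFz : ∀ i, Fmap α R v xstar i = 0 := fun i => tendsto_nhds_unique (hFstar i) (hF0 i)
  refine ⟨xstar, hxt, funext hFz, ?_, ?_⟩
  · funext i
    have h := hFz i
    simp only [Fmap, Pi.sub_apply, Pi.add_apply, Pi.smul_apply, smul_eq_mul,
      Pi.zero_apply] at h ⊢
    linarith
  · apply tendsto_pi_nhds.mpr
    intro i
    simpa using hF0 i
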